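/- For every n,d ∈ ℕ with 1 ≤ d ≤ n and every function f : {-1,1}^n → ℂ of degree at most d, ‖∇f‖_{L_∞} ≤ 2d · ‖f‖_{L_∞}. -/

import Mathlib

open scoped BigOperators ENNReal NNReal

noncomputable section

namespace HammingCube

variable {X : Type*} [NormedAddCommGroup X] [NormedSpace ℂ X]

/-- The sign ±1 associated to a boolean coordinate. -/
def sgn (b : Bool) : ℝ := if b then 1 else -1

/-- The Walsh function `w_A(ε) = ∏_{i ∈ A} ε_i`. -/
def walsh {n : ℕ} (A : Finset (Fin n)) (ε : Fin n → Bool) : ℝ := ∏ i ∈ A, sgn (ε i)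

/-- The Fourier–Walsh coefficient `f̂(A) = 2⁻ⁿ ∑_δ f(δ) w_A(δ)`. -/
def coeff {n : ℕ} (f : (Fin n → Bool) → X) (A : Finset (Fin n)) : X :=
  (2 ^ n : ℝ)⁻¹ • ∑ δ : Fin n → Bool, walsh A δ • f δ

/-- `f` has degree at most `d`: `f̂(A) = 0` whenever `|A| > d`. -/
def degLE {n : ℕ} (f : (Fin n → Bool) → X) (d : ℕ) : Prop :=
  ∀ A : Finset (Fin n), d < A.card → coeff f A = 0

/-- `f` belongs to the `d`-th tail space: `f̂(A) = 0` whenever `|A| < d`. -/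
def tailSpace {n : ℕ} (f : (Fin n → Bool) → X) (d : ℕ) : Prop :=
  ∀ A : Finset (Fin n), A.card < d → coeff f A = 0

/-- The heat semigroup `e^{-tΔ} f = ∑_A e^{-t|A|} f̂(A) w_A`. -/
def heat {n : ℕ} (t : ℝ) (f : (Fin n → Bool) → X) : (Fin n → Bool) → X :=
  fun ε => ∑ A : Finset (Fin n), Real.exp (-t * A.card) • walsh A ε • coeff f A

/-- The hypercube Laplacian `Δ f = ∑_A |A| f̂(A) w_A`. -/
def lap {n : ℕ} (f : (Fin n → Bool) → X) : (Fin n → Bool) → X :=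
  fun ε => ∑ A : Finset (Fin n), (A.card : ℝ) • walsh A ε • coeff f A

/-- The fractional Laplacian `Δ^γ f = ∑_A |A|^γ f̂(A) w_A`. -/
def fracLap {n : ℕ} (γ : ℝ) (f : (Fin n → Bool) → X) : (Fin n → Bool) → X :=
  fun ε => ∑ A : Finset (Fin n), ((A.card : ℝ) ^ γ) • walsh A ε • coeff f A

/-- The `i`-th discrete partial derivative. -/
def pderiv {n : ℕ} (i : Fin n) (f : (Fin n → Bool) → X) : (Fin n → Bool) → X :=
  fun ε => (2 : ℝ)⁻¹ • (f ε - f (Function.update ε i (!(ε i))))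

/-- The vector-valued `L_p` norm `(2⁻ⁿ ∑_ε ‖f(ε)‖^p)^{1/p}` for finite `p`. -/
def lpNorm {n : ℕ} {Y : Type*} [NormedAddCommGroup Y] (p : ℝ)
    (f : (Fin n → Bool) → Y) : ℝ :=
  ((2 ^ n : ℝ)⁻¹ * ∑ ε : Fin n → Bool, ‖f ε‖ ^ p) ^ (1 / p)

/-- The `L_∞` norm `max_ε ‖f(ε)‖`. -/
def linfNorm {n : ℕ} {Y : Type*} [NormedAddCommGroup Y]
    (f : (Fin n → Bool) → Y) : ℝ :=
  ⨆ ε : Fin n → Bool, ‖f ε‖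

/-- The `L_p` norm for `p ∈ [1,∞]` encoded as `p : ℝ≥0∞`. -/
def lpNormE {n : ℕ} {Y : Type*} [NormedAddCommGroup Y] (p : ℝ≥0∞)
    (f : (Fin n → Bool) → Y) : ℝ :=
  if p = ⊤ then linfNorm f else lpNorm p.toReal f

/-- The scalar `L_p` norm of the gradient `‖(∑_i |∂_i f|²)^{1/2}‖_{L_p}`. -/
def gradLpNorm {n : ℕ} (p : ℝ) (f : (Fin n → Bool) → ℂ) : ℝ :=
  lpNorm p (fun ε => Real.sqrt (∑ i : Fin n, ‖pderiv i f ε‖ ^ 2))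

/-- The Rademacher projection `Rad f(ε) = ∑_i f̂({i}) ε_i`. -/
def Rad {n : ℕ} (f : (Fin n → Bool) → X) : (Fin n → Bool) → X :=
  fun ε => ∑ i : Fin n, sgn (ε i) • coeff f {i}

/-- A complex Banach space is `K`-convex if the Rademacher projections are uniformly
bounded on `L_q` for some `q ∈ (1,∞)`. -/
def KConvex (X : Type*) [NormedAddCommGroup X] [NormedSpace ℂ X] : Prop :=
  ∃ q : ℝ, 1 < q ∧ ∃ M : ℝ, ∀ (n : ℕ) (f : (Fin n → Bool) → X),
    lpNorm q (Rad f) ≤ M * lpNorm q f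

/-- `X` has cotype `q` with constant `C`. -/
def HasCotype (X : Type*) [NormedAddCommGroup X] [NormedSpace ℂ X] (q C : ℝ) : Prop :=
  ∀ (n : ℕ) (x : Fin n → X),
    C⁻¹ * (∑ i : Fin n, ‖x i‖ ^ q) ^ (1 / q) ≤
      ((2 ^ n : ℝ)⁻¹ * ∑ ε : Fin n → Bool, ‖∑ i : Fin n, sgn (ε i) • x i‖ ^ q) ^ (1 / q)

/-- The entropy `Ent(h)` of a nonnegative function on the cube. -/
def entropy {n : ℕ} (h : (Fin n → Bool) → ℝ) : ℝ :=
  (2 ^ n : ℝ)⁻¹ * ∑ ε : Fin n → Bool, h ε * Real.log (h ε) -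
    ((2 ^ n : ℝ)⁻¹ * ∑ ε : Fin n → Bool, h ε) *
      Real.log ((2 ^ n : ℝ)⁻¹ * ∑ ε : Fin n → Bool, h ε)

/-- The `L_∞` norm of the gradient `max_ε (∑_i |∂_i f(ε)|²)^{1/2}`. -/
def gradLinfNorm {n : ℕ} (f : (Fin n → Bool) → ℂ) : ℝ :=
  ⨆ ε : Fin n → Bool, Real.sqrt (∑ i : Fin n, ‖pderiv i f ε‖ ^ 2)



end HammingCube
end

noncomputable section BernsteinAux
open Polynomial Finset Real HammingCube


lemma derivative_finset_prod {R : Type*} [CommSemiring R] {ι : Type*} [DecidableEq ι]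
    (s : Finset ι) (f : ι → R[X]) :
    derivative (∏ i ∈ s, f i) = ∑ i ∈ s, (∏ j ∈ s.erase i, f j) * derivative (f i) := by
  induction s using Finset.induction_on with
  | empty => simp
  | insert a s ha ih =>
    rw [Finset.prod_insert ha, derivative_mul, ih, Finset.sum_insert ha, Finset.erase_insert ha,
      Finset.mul_sum]
    congr 1
    · ring
    · refine Finset.sum_congr rfl fun i hi => ?_
      rw [Finset.erase_insert_of_ne (by rintro rfl; exact ha hi), Finset.prod_insert
        (fun h => ha (Finset.mem_of_mem_erase h))]
      ring

lemma natDegree_T_le (n : ℕ) : (Chebyshev.T ℝ (n : ℤ)).natDegree ≤ n := by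
  induction n using Nat.twoStepInduction with
  | zero => simp [Chebyshev.T_zero]
  | one => simp [Chebyshev.T_one]
  | more n ih1 ih2 =>
    have h : ((n + 2 : ℕ) : ℤ) = (n : ℤ) + 2 := by push_cast; ring
    rw [h, Chebyshev.T_add_two]
    refine le_trans (natDegree_sub_le _ _) (max_le ?_ ?_)
    · refine le_trans natDegree_mul_le ?_
      have h1 : (2 * X : ℝ[X]).natDegree ≤ 1 := le_trans natDegree_mul_le (by simp)
      have h2 : ((n : ℤ) + 1) = ((n + 1 : ℕ) : ℤ) := by push_cast; ring
      rw [h2]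
      have := ih2
      omega
    · omega

lemma U_eval_one (n : ℕ) : (Chebyshev.U ℝ (n : ℤ)).eval 1 = n + 1 := by
  induction n using Nat.twoStepInduction with
  | zero => simp [Chebyshev.U_zero]
  | one => norm_num [Chebyshev.U_one]
  | more n ih1 ih2 =>
    have h : ((n + 2 : ℕ) : ℤ) = (n : ℤ) + 2 := by push_cast; ring
    rw [h, Chebyshev.U_add_two]
    have h1 : ((n : ℤ) + 1) = ((n + 1 : ℕ) : ℤ) := by push_cast; ring
    have h2 : ((n : ℤ) + 2 - 2) = ((n : ℕ) : ℤ) := by push_cast; ring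
    rw [h1]
    simp only [eval_sub, eval_mul, eval_ofNat, eval_X, ih1, ih2]
    push_cast
    ring

lemma T_deriv_one (d : ℕ) (hd : 1 ≤ d) :
    (derivative (Chebyshev.T ℝ (d : ℤ))).eval 1 = (d : ℝ) ^ 2 := by
  rw [Chebyshev.T_derivative_eq_U]
  have h : ((d : ℤ) - 1) = ((d - 1 : ℕ) : ℤ) := by omega
  rw [h]
  simp only [eval_mul, eval_intCast, U_eval_one]
  have : ((d - 1 : ℕ) : ℝ) + 1 = d := by
    have := hd; push_cast [Nat.cast_sub hd]; ring
  rw [this]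
  push_cast
  ring

noncomputable def nodes (d : ℕ) : Fin (d+1) → ℝ := fun j => Real.cos ((j : ℕ) * π / d)

lemma nodes_strictAnti {d : ℕ} (hd : 1 ≤ d) : StrictAnti (nodes d) := by
  intro j k hjk
  have hd' : (0:ℝ) < d := by exact_mod_cast hd
  have harg : ∀ m : Fin (d+1), ((m:ℕ) * π / d) ∈ Set.Icc 0 π := by
    intro m
    constructor
    · positivity
    · rw [div_le_iff₀ hd']
      have hm : ((m:ℕ):ℝ) ≤ (d:ℝ) := by
        have := m.isLt; exact_mod_cast Nat.lt_succ_iff.mp this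
      nlinarith [Real.pi_pos]
  refine Real.strictAntiOn_cos (harg j) (harg k) ?_
  have : ((j:ℕ):ℝ) < ((k:ℕ):ℝ) := by exact_mod_cast hjk
  have hπ := Real.pi_pos
  apply div_lt_div_of_pos_right _ hd' <;> nlinarith

lemma nodes_injOn {d : ℕ} (hd : 1 ≤ d) :
    Set.InjOn (nodes d) (univ : Finset (Fin (d+1))) :=
  fun a _ b _ h => ((nodes_strictAnti hd).injective h)

lemma nodes_le_one {d : ℕ} (j : Fin (d+1)) : nodes d j ≤ 1 := Real.cos_le_one _
lemma neg_one_le_nodes {d : ℕ} (j : Fin (d+1)) : -1 ≤ nodes d j := Real.neg_one_le_cos _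

lemma nodes_zero {d : ℕ} : nodes d 0 = 1 := by simp [nodes]

lemma prod_neg_pos {ι : Type*} {s : Finset ι} {f : ι → ℝ} (h : ∀ k ∈ s, f k < 0) :
    0 < (-1) ^ s.card * ∏ k ∈ s, f k := by
  have : ∏ k ∈ s, f k = (-1) ^ s.card * ∏ k ∈ s, (-(f k)) := by
    rw [← Finset.prod_const (-1 : ℝ), ← Finset.prod_mul_distrib]
    exact Finset.prod_congr rfl (by intros; ring)
  rw [this, ← mul_assoc, ← pow_add, ← two_mul, pow_mul]
  norm_num
  exact Finset.prod_pos fun k hk => neg_pos.mpr (h k hk)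

section basiscomp
variable {F : Type*} [Field F] {ι : Type*} [DecidableEq ι] [Fintype ι]

lemma basis_eq (v : ι → F) (j : ι) :
    Lagrange.basis univ v j =
      C (∏ k ∈ univ.erase j, (v j - v k)⁻¹) * ∏ k ∈ univ.erase j, (X - C (v k)) := by
  rw [Lagrange.basis, map_prod, ← Finset.prod_mul_distrib]
  rfl

lemma basis_deriv_eval (v : ι → F) (j : ι) (t : F) :
    (derivative (Lagrange.basis univ v j)).eval t =
      (∏ k ∈ univ.erase j, (v j - v k)⁻¹) *
        ∑ k ∈ univ.erase j, ∏ m ∈ (univ.erase j).erase k, (t - v m) := by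
  rw [basis_eq, derivative_C_mul, eval_mul, eval_C, derivative_finset_prod]
  congr 1
  rw [eval_finset_sum]
  refine Finset.sum_congr rfl fun k hk => ?_
  simp [eval_prod]
end basiscomp

noncomputable def lam (d : ℕ) (j : Fin (d+1)) : ℝ :=
  (derivative (Lagrange.basis univ (nodes d) j)).eval 1

lemma lam_abs {d : ℕ} (hd : 1 ≤ d) (j : Fin (d+1)) :
    |lam d j| = (-1) ^ (j:ℕ) * lam d j := by
  have hrep := basis_deriv_eval (nodes d) j 1
  have hSnn : 0 ≤ ∑ k ∈ univ.erase j, ∏ m ∈ (univ.erase j).erase k, (1 - nodes d m) := by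
    refine Finset.sum_nonneg fun k _ => Finset.prod_nonneg fun m _ => ?_
    have := nodes_le_one (d := d) m; linarith
  have hsplit : univ.erase j = Finset.Iio j ∪ Finset.Ioi j := by
    ext k
    simp only [Finset.mem_erase, Finset.mem_univ, and_true, Finset.mem_union, Finset.mem_Iio,
      Finset.mem_Ioi]
    exact ⟨fun h => lt_or_gt_of_ne h, fun h => h.elim ne_of_lt (fun h' => (ne_of_lt h').symm)⟩
  have hPsign : 0 < (-1) ^ (j:ℕ) * ∏ k ∈ univ.erase j, (nodes d j - nodes d k) := by
    rw [hsplit, Finset.prod_union (by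
      rw [Finset.disjoint_left]
      intro a ha hb
      exact absurd (Finset.mem_Iio.mp ha) (not_lt.mpr (Finset.mem_Ioi.mp hb).le))]
    have h1 : 0 < (-1) ^ (j:ℕ) * ∏ k ∈ Finset.Iio j, (nodes d j - nodes d k) := by
      have := prod_neg_pos (s := Finset.Iio j)
        (f := fun k => nodes d j - nodes d k) (fun k hk => by
          have := (nodes_strictAnti hd) (Finset.mem_Iio.mp hk)
          simp only [sub_neg]
          linarith)
      rwa [Fin.card_Iio] at this
    have h2 : 0 < ∏ k ∈ Finset.Ioi j, (nodes d j - nodes d k) := by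
      refine Finset.prod_pos fun k hk => ?_
      have := (nodes_strictAnti hd) (Finset.mem_Ioi.mp hk)
      linarith
    calc (0:ℝ) < ((-1) ^ (j:ℕ) * ∏ k ∈ Finset.Iio j, (nodes d j - nodes d k)) *
        ∏ k ∈ Finset.Ioi j, (nodes d j - nodes d k) := mul_pos h1 h2
    _ = _ := by ring
  have hEsign : 0 ≤ (-1) ^ (j:ℕ) * lam d j := by
    have hlam : lam d j = (∏ k ∈ univ.erase j, (nodes d j - nodes d k))⁻¹ *
        ∑ k ∈ univ.erase j, ∏ m ∈ (univ.erase j).erase k, (1 - nodes d m) := by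
      rw [lam, hrep, ← Finset.prod_inv_distrib]
    have hPinv : 0 < (-1) ^ (j:ℕ) * (∏ k ∈ univ.erase j, (nodes d j - nodes d k))⁻¹ := by
      have := inv_pos.mpr hPsign
      rwa [mul_inv, ← inv_pow, inv_neg_one] at this
    rw [hlam]
    calc (0:ℝ) ≤ ((-1) ^ (j:ℕ) * (∏ k ∈ univ.erase j, (nodes d j - nodes d k))⁻¹) *
        ∑ k ∈ univ.erase j, ∏ m ∈ (univ.erase j).erase k, (1 - nodes d m) :=
      mul_nonneg hPinv.le hSnn
    _ = _ := by ring
  have habs : |(-1) ^ (j:ℕ) * lam d j| = (-1) ^ (j:ℕ) * lam d j := abs_of_nonneg hEsign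
  rw [abs_mul, abs_pow, abs_neg, abs_one, one_pow, one_mul] at habs
  exact habs

lemma T_eval_node {d : ℕ} (hd : 1 ≤ d) (j : Fin (d+1)) :
    (Chebyshev.T ℝ (d : ℤ)).eval (nodes d j) = (-1) ^ (j:ℕ) := by
  have hd' : (d:ℝ) ≠ 0 := by positivity
  rw [nodes, Chebyshev.T_real_cos]
  have harg : ((d:ℤ) : ℝ) * ((j:ℕ) * π / d) = (j:ℕ) * π := by
    push_cast; field_simp
  rw [harg]
  have := Real.cos_nat_mul_pi_sub 0 (j:ℕ)
  simpa using this

lemma sum_abs_lam {d : ℕ} (hd : 1 ≤ d) : ∑ j, |lam d j| = (d:ℝ)^2 := by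
  have hdeg : (Chebyshev.T ℝ (d : ℤ)).degree < (univ : Finset (Fin (d+1))).card := by
    refine lt_of_le_of_lt (degree_le_natDegree) ?_
    rw [Finset.card_univ, Fintype.card_fin]
    exact_mod_cast Nat.lt_succ_of_le (natDegree_T_le d)
  have hinterp := Lagrange.eq_interpolate (f := Chebyshev.T ℝ (d : ℤ))
    (nodes_injOn hd) hdeg
  rw [Lagrange.interpolate_apply] at hinterp
  have hsum : (d:ℝ)^2 = ∑ j : Fin (d+1), ((-1):ℝ) ^ (j:ℕ) * lam d j := by
    have := congrArg (fun p => (derivative p).eval 1) hinterp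
    simp only [derivative_sum, eval_finset_sum, derivative_C_mul, eval_mul, eval_C] at this
    rw [T_deriv_one d hd] at this
    rw [this]
    refine Finset.sum_congr rfl fun j _ => ?_
    rw [T_eval_node hd j, lam]
  rw [hsum]
  exact Finset.sum_congr rfl fun j _ => lam_abs hd j

lemma basis_map {d : ℕ} (j : Fin (d+1)) :
    (Lagrange.basis univ (nodes d) j).map Complex.ofRealHom =
      Lagrange.basis univ (fun k => ((nodes d k : ℝ) : ℂ)) j := by
  rw [Lagrange.basis, Polynomial.map_prod]
  refine Finset.prod_congr rfl fun k _ => ?_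
  rw [Lagrange.basisDivisor, Lagrange.basisDivisor]
  rw [Polynomial.map_mul, Polynomial.map_sub, map_C, map_X, map_C]
  simp [Complex.ofRealHom_eq_coe, Complex.ofReal_inv, Complex.ofReal_sub]

theorem markov_endpoint (d : ℕ) (hd : 1 ≤ d) (q : ℂ[X]) (hq : q.natDegree ≤ d) (M : ℝ)
    (hM : ∀ t : ℝ, |t| ≤ 1 → ‖q.eval (t:ℂ)‖ ≤ M) :
    ‖(derivative q).eval 1‖ ≤ (d:ℝ)^2 * M := by
  set vℂ : Fin (d+1) → ℂ := fun k => ((nodes d k : ℝ) : ℂ) with hvℂ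
  have hinj : Set.InjOn vℂ (univ : Finset (Fin (d+1))) := by
    intro a ha b hb h
    have h' : ((nodes d a : ℝ) : ℂ) = ((nodes d b : ℝ) : ℂ) := h
    exact nodes_injOn hd ha hb (by exact_mod_cast h')
  have hdeg : q.degree < (univ : Finset (Fin (d+1))).card := by
    refine lt_of_le_of_lt (degree_le_natDegree) ?_
    rw [Finset.card_univ, Fintype.card_fin]
    exact_mod_cast Nat.lt_succ_of_le hq
  have hinterp := Lagrange.eq_interpolate (f := q) hinj hdeg
  rw [Lagrange.interpolate_apply] at hinterp
  have hbasis : ∀ j : Fin (d+1),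
      (derivative (Lagrange.basis univ vℂ j)).eval 1 = ((lam d j : ℝ) : ℂ) := by
    intro j
    rw [hvℂ, ← basis_map, derivative_map, lam]
    rw [Polynomial.eval_map]
    exact Polynomial.eval₂_at_one _
  have key : (derivative q).eval 1 = ∑ j, q.eval (vℂ j) * ((lam d j : ℝ) : ℂ) := by
    conv_lhs => rw [hinterp]
    simp only [derivative_sum, eval_finset_sum, derivative_C_mul, eval_mul, eval_C]
    exact Finset.sum_congr rfl fun j _ => by rw [hbasis j]
  rw [key]
  calc ‖∑ j, q.eval (vℂ j) * ((lam d j : ℝ) : ℂ)‖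
      ≤ ∑ j, ‖q.eval (vℂ j) * ((lam d j : ℝ) : ℂ)‖ := norm_sum_le _ _
    _ ≤ ∑ j, M * |lam d j| := by
        refine Finset.sum_le_sum fun j _ => ?_
        rw [norm_mul, Complex.norm_real, Real.norm_eq_abs]
        refine mul_le_mul_of_nonneg_right ?_ (abs_nonneg _)
        refine hM (nodes d j) (abs_le.mpr ⟨neg_one_le_nodes j, nodes_le_one j⟩)
    _ = M * ∑ j, |lam d j| := by rw [Finset.mul_sum]
    _ = (d:ℝ)^2 * M := by rw [sum_abs_lam hd]; ring


lemma sgn_sq (a : Bool) : sgn a * sgn a = 1 := by cases a <;> norm_num [sgn]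
lemma sgn_mul_of_ne {a c : Bool} (h : a ≠ c) : sgn a * sgn c = -1 := by
  cases a <;> cases c <;> simp_all [sgn]
lemma sgn_not (a : Bool) : sgn (!a) = -sgn a := by cases a <;> simp [sgn]
lemma sgn_abs (a : Bool) : |sgn a| = 1 := by cases a <;> simp [sgn]

lemma coeff_eq {n : ℕ} (f : (Fin n → Bool) → ℂ) (A : Finset (Fin n)) :
    HammingCube.coeff f A = ((2 ^ n : ℂ))⁻¹ * ∑ δ : Fin n → Bool, ((walsh A δ : ℝ) : ℂ) * f δ := by
  rw [HammingCube.coeff, Complex.real_smul]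
  push_cast
  rw [Finset.mul_sum, Finset.mul_sum]
  refine Finset.sum_congr rfl fun δ _ => ?_
  rw [Complex.real_smul]

variable {n : ℕ} (f : (Fin n → Bool) → ℂ) (ε : Fin n → Bool) (b : Fin n → ℝ)

def lin (i : Fin n) : ℂ[X] :=
  C ((sgn (ε i) * (1 - b i) : ℝ) : ℂ) + C ((sgn (ε i) * b i : ℝ) : ℂ) * X

def KP : ℂ[X] := ∑ A : Finset (Fin n), C (HammingCube.coeff f A) * ∏ i ∈ A, lin ε b i

lemma lin_natDegree (i : Fin n) : (lin ε b i).natDegree ≤ 1 := by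
  refine le_trans (natDegree_add_le _ _) (max_le (by rw [natDegree_C]; omega) ?_)
  refine le_trans (natDegree_C_mul_le _ _) natDegree_X_le

lemma lin_eval_real (i : Fin n) (t : ℝ) :
    (lin ε b i).eval (t : ℂ) = ((sgn (ε i) * (1 - b i * (1 - t)) : ℝ) : ℂ) := by
  simp [lin]
  push_cast
  ring

lemma KP_natDegree {d : ℕ} (hf : degLE f d) : (KP f ε b).natDegree ≤ d := by
  refine natDegree_sum_le_of_forall_le _ _ fun A _ => ?_
  by_cases h : HammingCube.coeff f A = 0
  · simp [h]
  · have hA : A.card ≤ d := le_of_not_gt fun hlt => h (hf A hlt)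
    refine le_trans (natDegree_C_mul_le _ _) ?_
    refine le_trans (natDegree_prod_le _ _) (le_trans ?_ hA)
    calc ∑ i ∈ A, (lin ε b i).natDegree ≤ ∑ i ∈ A, 1 :=
      Finset.sum_le_sum fun i _ => lin_natDegree ε b i
    _ = A.card := by simp

lemma KP_eq :
    KP f ε b = C ((2 ^ n : ℂ))⁻¹ * ∑ δ : Fin n → Bool, C (f δ) *
      ∏ i, (1 + C ((sgn (δ i) : ℝ) : ℂ) * lin ε b i) := by
  have expand : ∀ δ : Fin n → Bool,
      (∏ i, (1 + C ((sgn (δ i) : ℝ) : ℂ) * lin ε b i)) =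
        ∑ A : Finset (Fin n), C ((walsh A δ : ℝ) : ℂ) * ∏ i ∈ A, lin ε b i := by
    intro δ
    have h0 : (∏ i, (1 + C ((sgn (δ i) : ℝ) : ℂ) * lin ε b i)) =
        ∏ i, (C ((sgn (δ i) : ℝ) : ℂ) * lin ε b i + 1) :=
      Finset.prod_congr rfl fun i _ => add_comm _ _
    rw [h0, Finset.prod_add, Finset.powerset_univ]
    refine Finset.sum_congr rfl fun A _ => ?_
    rw [Finset.prod_const_one, mul_one, Finset.prod_mul_distrib]
    congr 1
    rw [walsh, Complex.ofReal_prod, map_prod]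
  rw [show KP f ε b = ∑ A : Finset (Fin n), C (HammingCube.coeff f A) * ∏ i ∈ A, lin ε b i from rfl]
  simp only [expand, Finset.mul_sum]
  rw [Finset.sum_comm]
  refine Finset.sum_congr rfl fun A _ => ?_
  have hc : C (HammingCube.coeff f A) = C ((2 ^ n : ℂ))⁻¹ *
      ∑ δ : Fin n → Bool, C ((walsh A δ : ℝ) : ℂ) * C (f δ) := by
    rw [coeff_eq, map_mul, map_sum]
    simp only [map_mul]
  rw [hc, mul_assoc, Finset.sum_mul, Finset.mul_sum]
  refine Finset.sum_congr rfl fun δ _ => by ring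

lemma sum_prod_bool {M : Type*} [CommSemiring M] (g : Fin n → Bool → M) :
    ∑ δ : Fin n → Bool, ∏ i, g i (δ i) = ∏ i, (g i true + g i false) := by
  classical
  have h := Finset.prod_univ_sum (t := fun _ : Fin n => (Finset.univ : Finset Bool))
    (f := fun i c => g i c)
  rw [Fintype.piFinset_univ] at h
  rw [← h]
  exact Finset.prod_congr rfl fun i _ => by rw [Fintype.sum_bool]

lemma KP_eval_norm (hb : ∀ i, 0 ≤ b i ∧ b i ≤ 1) (L : ℝ) (hL : ∀ δ, ‖f δ‖ ≤ L)
    (t : ℝ) (ht : |t| ≤ 1) : ‖(KP f ε b).eval (t : ℂ)‖ ≤ L := by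
  have hu : ∀ i : Fin n, |1 - b i * (1 - t)| ≤ 1 := by
    intro i
    have h1 := (hb i).1; have h2 := (hb i).2
    have ht1 := abs_le.mp ht
    rw [abs_le]
    constructor <;> nlinarith
  set u : Fin n → ℝ := fun i => 1 - b i * (1 - t) with hu_def
  set W : (Fin n → Bool) → ℝ := fun δ => ∏ i, (1 + sgn (δ i) * (sgn (ε i) * u i)) with hW
  have hWnn : ∀ δ, 0 ≤ W δ := by
    intro δ
    refine Finset.prod_nonneg fun i _ => ?_
    have : |sgn (δ i) * (sgn (ε i) * u i)| ≤ 1 := by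
      rw [abs_mul, abs_mul, sgn_abs, sgn_abs, one_mul, one_mul]
      exact hu i
    have := abs_le.mp this
    linarith [this.1]
  have hWsum : ∑ δ : Fin n → Bool, W δ = 2 ^ n := by
    rw [hW]
    rw [sum_prod_bool (g := fun i c => 1 + sgn c * (sgn (ε i) * u i))]
    have : ∀ i : Fin n, (1 + sgn true * (sgn (ε i) * u i)) +
        (1 + sgn false * (sgn (ε i) * u i)) = 2 := by
      intro i
      have h1 : sgn true = 1 := rfl
      have h2 : sgn false = -1 := rfl
      rw [h1, h2]; ring
    rw [Finset.prod_congr rfl fun i _ => this i, Finset.prod_const]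
    norm_num
  have heval : (KP f ε b).eval (t : ℂ) =
      ((2 ^ n : ℂ))⁻¹ * ∑ δ : Fin n → Bool, f δ * ((W δ : ℝ) : ℂ) := by
    rw [KP_eq]
    simp only [eval_mul, eval_C, eval_finset_sum, eval_prod, eval_add, eval_one]
    congr 1
    refine Finset.sum_congr rfl fun δ _ => ?_
    congr 1
    rw [hW, Complex.ofReal_prod]
    refine Finset.prod_congr rfl fun i _ => ?_
    rw [lin_eval_real]
    simp only [hu_def]
    push_cast
    ring
  rw [heval]
  have hL0 : 0 ≤ L := le_trans (norm_nonneg _) (hL ε)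
  calc ‖((2 ^ n : ℂ))⁻¹ * ∑ δ : Fin n → Bool, f δ * ((W δ : ℝ) : ℂ)‖
      = (2 ^ n : ℝ)⁻¹ * ‖∑ δ : Fin n → Bool, f δ * ((W δ : ℝ) : ℂ)‖ := by
        rw [norm_mul, norm_inv]
        norm_num
    _ ≤ (2 ^ n : ℝ)⁻¹ * ∑ δ : Fin n → Bool, L * W δ := by
        refine mul_le_mul_of_nonneg_left (le_trans (norm_sum_le _ _)
          (Finset.sum_le_sum fun δ _ => ?_)) (by positivity)
        rw [norm_mul, Complex.norm_real, Real.norm_eq_abs, abs_of_nonneg (hWnn δ)]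
        exact mul_le_mul_of_nonneg_right (hL δ) (hWnn δ)
    _ = L := by
        rw [← Finset.mul_sum, hWsum]
        field_simp

lemma derivative_finset_prod' {R : Type*} [CommSemiring R] {ι : Type*} [DecidableEq ι]
    (s : Finset ι) (g : ι → R[X]) :
    derivative (∏ i ∈ s, g i) = ∑ i ∈ s, (∏ j ∈ s.erase i, g j) * derivative (g i) := by
  induction s using Finset.induction_on with
  | empty => simp
  | insert a s ha ih =>
    rw [Finset.prod_insert ha, derivative_mul, ih, Finset.sum_insert ha, Finset.erase_insert ha,
      Finset.mul_sum]
    congr 1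
    · ring
    · refine Finset.sum_congr rfl fun i hi => ?_
      rw [Finset.erase_insert_of_ne (by rintro rfl; exact ha hi), Finset.prod_insert
        (fun h => ha (Finset.mem_of_mem_erase h))]
      ring

lemma lin_derivative (i : Fin n) :
    derivative (lin ε b i) = C ((sgn (ε i) * b i : ℝ) : ℂ) := by
  rw [lin, derivative_add, derivative_C, derivative_C_mul, derivative_X, zero_add, mul_one]

lemma lin_eval_one (i : Fin n) : (lin ε b i).eval (1 : ℂ) = ((sgn (ε i) : ℝ) : ℂ) := by
  have h : ((1:ℝ) : ℂ) = (1 : ℂ) := by norm_num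
  rw [← h, lin_eval_real]
  norm_num

lemma KP_deriv_eval (hn : 1 ≤ n) :
    (derivative (KP f ε b)).eval 1 = ∑ i, ((b i : ℝ) : ℂ) * pderiv i f ε := by
  have hform : (derivative (KP f ε b)).eval 1 = ((2 ^ n : ℂ))⁻¹ * ∑ δ : Fin n → Bool, f δ *
      ∑ i, (∏ k ∈ univ.erase i, ((1 + sgn (δ k) * sgn (ε k) : ℝ) : ℂ)) *
        (((sgn (δ i) : ℝ) : ℂ) * ((sgn (ε i) * b i : ℝ) : ℂ)) := by
    rw [KP_eq, derivative_C_mul, derivative_sum, eval_mul, eval_C, eval_finset_sum]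
    congr 1
    refine Finset.sum_congr rfl fun δ _ => ?_
    rw [derivative_C_mul, eval_mul, eval_C]
    congr 1
    rw [derivative_finset_prod', eval_finset_sum]
    refine Finset.sum_congr rfl fun i _ => ?_
    rw [derivative_add, derivative_one, zero_add, derivative_C_mul, lin_derivative,
      eval_mul, eval_prod]
    congr 1
    · refine Finset.prod_congr rfl fun k hk => ?_
      rw [eval_add, eval_one, eval_mul, eval_C, lin_eval_one]
      push_cast
      ring
    · rw [eval_mul, eval_C, eval_C]
  rw [hform]
  have hswap : ∑ δ : Fin n → Bool, f δ *
      ∑ i, (∏ k ∈ univ.erase i, ((1 + sgn (δ k) * sgn (ε k) : ℝ) : ℂ)) *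
        (((sgn (δ i) : ℝ) : ℂ) * ((sgn (ε i) * b i : ℝ) : ℂ)) =
      ∑ i, ∑ δ : Fin n → Bool, f δ *
        ((∏ k ∈ univ.erase i, ((1 + sgn (δ k) * sgn (ε k) : ℝ) : ℂ)) *
        (((sgn (δ i) : ℝ) : ℂ) * ((sgn (ε i) * b i : ℝ) : ℂ))) := by
    simp only [Finset.mul_sum]
    exact Finset.sum_comm
  rw [hswap]
  have hinner : ∀ i : Fin n, ∑ δ : Fin n → Bool, f δ *
      ((∏ k ∈ univ.erase i, ((1 + sgn (δ k) * sgn (ε k) : ℝ) : ℂ)) *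
        (((sgn (δ i) : ℝ) : ℂ) * ((sgn (ε i) * b i : ℝ) : ℂ))) =
      (2 ^ (n-1) : ℂ) * (((b i : ℝ) : ℂ) *
        (f ε - f (Function.update ε i (!(ε i))))) := by
    intro i
    set flip := Function.update ε i (!(ε i)) with hflip
    have hflipi : flip i = !(ε i) := by rw [hflip, Function.update_self]
    have hne : ε ≠ flip := by
      intro h
      have h2 := congrFun h i
      rw [hflipi] at h2
      exact absurd h2 (by cases (ε i) <;> simp)
    have hvanish : ∀ δ : Fin n → Bool, δ ≠ ε → δ ≠ flip →
        (∏ k ∈ univ.erase i, ((1 + sgn (δ k) * sgn (ε k) : ℝ) : ℂ)) = 0 := by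
      intro δ hδε hδflip
      have hex : ∃ k, k ≠ i ∧ δ k ≠ ε k := by
        by_contra h
        push_neg at h
        by_cases hi : δ i = ε i
        · exact hδε (funext fun k => if hk : k = i then by rw [hk]; exact hi else h k hk)
        · refine hδflip (funext fun k => ?_)
          by_cases hk : k = i
          · subst hk
            rw [hflipi]
            cases hεi : ε k <;> cases hδi : δ k <;> simp_all
          · rw [hflip, Function.update_of_ne hk, h k hk]
      obtain ⟨k, hki, hkv⟩ := hex
      refine Finset.prod_eq_zero (Finset.mem_erase.mpr ⟨hki, Finset.mem_univ k⟩) ?_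
      rw [sgn_mul_of_ne hkv]
      norm_num
    have hpair : ∑ δ : Fin n → Bool, f δ *
        ((∏ k ∈ univ.erase i, ((1 + sgn (δ k) * sgn (ε k) : ℝ) : ℂ)) *
          (((sgn (δ i) : ℝ) : ℂ) * ((sgn (ε i) * b i : ℝ) : ℂ))) =
        ∑ δ ∈ ({ε, flip} : Finset (Fin n → Bool)), f δ *
        ((∏ k ∈ univ.erase i, ((1 + sgn (δ k) * sgn (ε k) : ℝ) : ℂ)) *
          (((sgn (δ i) : ℝ) : ℂ) * ((sgn (ε i) * b i : ℝ) : ℂ))) := by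
      refine (Finset.sum_subset (Finset.subset_univ _) ?_).symm
      intro δ _ hδ
      simp only [Finset.mem_insert, Finset.mem_singleton, not_or] at hδ
      rw [hvanish δ hδ.1 hδ.2]
      ring
    have hprodε : (∏ k ∈ univ.erase i, ((1 + sgn (ε k) * sgn (ε k) : ℝ) : ℂ)) =
        (2 ^ (n-1) : ℂ) := by
      have h : ∀ k ∈ univ.erase i, ((1 + sgn (ε k) * sgn (ε k) : ℝ) : ℂ) = 2 := by
        intro k _
        rw [sgn_sq]
        norm_num
      rw [Finset.prod_congr rfl h, Finset.prod_const, Finset.card_erase_of_mem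
        (Finset.mem_univ i), Finset.card_univ, Fintype.card_fin]
    have hprodflip : (∏ k ∈ univ.erase i, ((1 + sgn (flip k) * sgn (ε k) : ℝ) : ℂ)) =
        (2 ^ (n-1) : ℂ) := by
      have h : ∀ k ∈ univ.erase i, ((1 + sgn (flip k) * sgn (ε k) : ℝ) : ℂ) = 2 := by
        intro k hk
        rw [hflip, Function.update_of_ne (Finset.mem_erase.mp hk).1, sgn_sq]
        norm_num
      rw [Finset.prod_congr rfl h, Finset.prod_const, Finset.card_erase_of_mem
        (Finset.mem_univ i), Finset.card_univ, Fintype.card_fin]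
    have hss := sgn_sq (ε i)
    have h1 : ((sgn (ε i) : ℝ) : ℂ) * ((sgn (ε i) * b i : ℝ) : ℂ) = ((b i : ℝ) : ℂ) := by
      rw [← Complex.ofReal_mul]
      congr 1
      rw [← mul_assoc, hss, one_mul]
    have h2 : ((sgn (flip i) : ℝ) : ℂ) * ((sgn (ε i) * b i : ℝ) : ℂ) = -((b i : ℝ) : ℂ) := by
      rw [hflipi, sgn_not, ← Complex.ofReal_mul, ← Complex.ofReal_neg]
      congr 1
      linear_combination (-(b i)) * hss
    rw [hpair, Finset.sum_pair hne, hprodε, hprodflip, h1, h2]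
    ring
  rw [Finset.sum_congr rfl fun i _ => hinner i, Finset.mul_sum]
  refine Finset.sum_congr rfl fun i _ => ?_
  have hpd : pderiv i f ε = (((2:ℝ)⁻¹ : ℝ) : ℂ) * (f ε - f (Function.update ε i (!(ε i)))) := by
    rw [show pderiv i f ε = (2 : ℝ)⁻¹ • (f ε - f (Function.update ε i (!(ε i)))) from rfl,
      Complex.real_smul]
  rw [hpd]
  have h2 : ((2 ^ n : ℂ))⁻¹ * (2 ^ (n-1) : ℂ) = (((2:ℝ)⁻¹ : ℝ) : ℂ) := by
    have hn' : n = (n - 1) + 1 := (Nat.succ_pred_eq_of_pos hn).symm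
    rw [hn', pow_succ]
    have hne2 : ((2:ℂ) ^ (n-1)) ≠ 0 := pow_ne_zero _ two_ne_zero
    push_cast
    field_simp
  calc ((2 ^ n : ℂ))⁻¹ * ((2 ^ (n-1) : ℂ) * (((b i : ℝ) : ℂ) *
      (f ε - f (Function.update ε i (!(ε i)))))) =
      (((2 ^ n : ℂ))⁻¹ * (2 ^ (n-1) : ℂ)) * (((b i : ℝ) : ℂ) *
      (f ε - f (Function.update ε i (!(ε i))))) := by ring
    _ = _ := by rw [h2]; ring

lemma posneg_sq (x : ℝ) : (max x 0)^2 + (max (-x) 0)^2 = x^2 := by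
  rcases le_or_gt x 0 with h | h
  · rw [max_eq_right h, max_eq_left (by linarith)]
    ring
  · rw [max_eq_left h.le, max_eq_right (by linarith)]
    ring

lemma quad_bound {m : ℕ} (L K : ℝ) (hL : 0 < L) (x : Fin m → ℝ) (hxL : ∀ i, |x i| ≤ L)
    (hx : ∀ b : Fin m → ℝ, (∀ i, 0 ≤ b i ∧ b i ≤ 1) → |∑ i, b i * x i| ≤ K) :
    ∑ i, (x i)^2 ≤ 2 * (L * K) := by
  have h1 : ∀ y : Fin m → ℝ, (∀ i, |y i| ≤ L) →
      (∀ b : Fin m → ℝ, (∀ i, 0 ≤ b i ∧ b i ≤ 1) → |∑ i, b i * y i| ≤ K) →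
      ∑ i, (max (y i) 0)^2 ≤ L * K := by
    intro y hyL hy
    have hb : ∀ i, 0 ≤ max (y i) 0 / L ∧ max (y i) 0 / L ≤ 1 := by
      intro i
      constructor
      · positivity
      · rw [div_le_one hL]
        refine max_le ?_ hL.le
        exact le_trans (le_abs_self _) (hyL i)
    have hsum : ∑ i, (max (y i) 0 / L) * y i = (∑ i, (max (y i) 0)^2) / L := by
      rw [Finset.sum_div]
      refine Finset.sum_congr rfl fun i _ => ?_
      rcases le_or_gt (y i) 0 with h | h
      · rw [max_eq_right h]
        simp
      · rw [max_eq_left h.le]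
        ring
    have := hy _ hb
    rw [hsum, abs_of_nonneg (by positivity)] at this
    calc ∑ i, (max (y i) 0)^2 = ((∑ i, (max (y i) 0)^2) / L) * L := by field_simp
    _ ≤ K * L := mul_le_mul_of_nonneg_right this hL.le
    _ = L * K := mul_comm _ _
  have hpos := h1 x hxL hx
  have hneg := h1 (fun i => -(x i)) (fun i => by rw [abs_neg]; exact hxL i) (fun b hb => by
    have := hx b hb
    calc |∑ i, b i * -(x i)| = |-(∑ i, b i * x i)| := by
          rw [← Finset.sum_neg_distrib]
          congr 1
          exact Finset.sum_congr rfl fun i _ => by ring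
      _ = |∑ i, b i * x i| := abs_neg _
      _ ≤ K := this)
  calc ∑ i, (x i)^2 = ∑ i, ((max (x i) 0)^2 + (max (-(x i)) 0)^2) :=
      Finset.sum_congr rfl fun i _ => (posneg_sq (x i)).symm
  _ = (∑ i, (max (x i) 0)^2) + ∑ i, (max (-(x i)) 0)^2 := Finset.sum_add_distrib
  _ ≤ L * K + L * K := add_le_add hpos hneg
  _ = 2 * (L * K) := by ring


end BernsteinAux

noncomputable section
namespace HammingCube

/-- **Endpoint (`p = ∞`) Bernstein–Markov inequality for the discrete gradient.** -/
theorem stmt19 (n d : ℕ) (hd : 1 ≤ d) (hdn : d ≤ n)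
    (f : (Fin n → Bool) → ℂ) (hf : degLE f d) :
    gradLinfNorm f ≤ 2 * (d : ℝ) * linfNorm f := by
  classical
  set L := linfNorm f with hLdef
  have hle : ∀ δ, ‖f δ‖ ≤ L := by
    intro δ
    refine le_ciSup (f := fun δ => ‖f δ‖) ?_ δ
    exact Set.Finite.bddAbove (Set.finite_range _)
  have hL0 : 0 ≤ L := le_trans (norm_nonneg _) (hle (fun _ => true))
  have hkey : ∀ (ε : Fin n → Bool) (b : Fin n → ℝ), (∀ i, 0 ≤ b i ∧ b i ≤ 1) →
      ‖∑ i, ((b i : ℝ) : ℂ) * pderiv i f ε‖ ≤ (d:ℝ)^2 * L := by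
    intro ε b hb
    rw [← KP_deriv_eval f ε b (le_trans hd hdn)]
    exact markov_endpoint d hd (KP f ε b) (KP_natDegree f ε b hf) L
      (fun t ht => KP_eval_norm f ε b hb L hle t ht)
  rw [gradLinfNorm]
  refine ciSup_le fun ε => ?_
  have hci : ∀ i, ‖pderiv i f ε‖ ≤ L := by
    intro i
    have : pderiv i f ε = (2:ℝ)⁻¹ • (f ε - f (Function.update ε i (!(ε i)))) := rfl
    rw [this, norm_smul]
    have : ‖f ε - f (Function.update ε i (!(ε i)))‖ ≤ L + L :=
      le_trans (norm_sub_le _ _) (add_le_add (hle _) (hle _))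
    rw [Real.norm_eq_abs, abs_of_nonneg (by norm_num : (0:ℝ) ≤ (2:ℝ)⁻¹)]
    linarith
  rcases eq_or_lt_of_le hL0 with hL | hL
  · have hz : ∀ i : Fin n, ‖pderiv i f ε‖ = 0 := by
      intro i
      have := hci i
      have := norm_nonneg (pderiv i f ε)
      linarith [hL.symm ▸ hci i]
    have hzz : ∑ i : Fin n, ‖pderiv i f ε‖^2 = 0 :=
      Finset.sum_eq_zero fun i _ => by rw [hz i]; norm_num
    rw [hzz, Real.sqrt_zero]
    positivity
  · -- L > 0
    have habs : ∀ (x : Fin n → ℝ), ((∀ i, x i = (pderiv i f ε).re) ∨ (∀ i, x i = (pderiv i f ε).im)) →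
        ∀ b : Fin n → ℝ, (∀ i, 0 ≤ b i ∧ b i ≤ 1) → |∑ i, b i * x i| ≤ (d:ℝ)^2 * L := by
      intro x hx b hb
      have hz := hkey ε b hb
      set z := ∑ i, ((b i : ℝ) : ℂ) * pderiv i f ε with hzdef
      have hre : z.re = ∑ i, b i * (pderiv i f ε).re := by
        rw [hzdef, Complex.re_sum]
        refine Finset.sum_congr rfl fun i _ => ?_
        simp [Complex.mul_re]
      have him : z.im = ∑ i, b i * (pderiv i f ε).im := by
        rw [hzdef, Complex.im_sum]
        refine Finset.sum_congr rfl fun i _ => ?_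
        simp [Complex.mul_im]
      rcases hx with hx | hx
      · have : ∑ i, b i * x i = z.re := by
          rw [hre]; exact Finset.sum_congr rfl fun i _ => by rw [hx i]
        rw [this]
        exact le_trans (Complex.abs_re_le_norm z) hz
      · have : ∑ i, b i * x i = z.im := by
          rw [him]; exact Finset.sum_congr rfl fun i _ => by rw [hx i]
        rw [this]
        exact le_trans (Complex.abs_im_le_norm z) hz
    have hqre := quad_bound L ((d:ℝ)^2 * L) hL (fun i => (pderiv i f ε).re)
      (fun i => le_trans (Complex.abs_re_le_norm _) (hci i)) (habs _ (Or.inl fun i => rfl))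
    have hqim := quad_bound L ((d:ℝ)^2 * L) hL (fun i => (pderiv i f ε).im)
      (fun i => le_trans (Complex.abs_im_le_norm _) (hci i)) (habs _ (Or.inr fun i => rfl))
    have hsq : ∑ i, ‖pderiv i f ε‖^2 =
        (∑ i, ((pderiv i f ε).re)^2) + ∑ i, ((pderiv i f ε).im)^2 := by
      rw [← Finset.sum_add_distrib]
      refine Finset.sum_congr rfl fun i _ => ?_
      rw [Complex.sq_norm, Complex.normSq_apply]
      ring
    have hfin : ∑ i, ‖pderiv i f ε‖^2 ≤ (2 * (d:ℝ) * L)^2 := by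
      rw [hsq]
      calc (∑ i, ((pderiv i f ε).re)^2) + ∑ i, ((pderiv i f ε).im)^2
          ≤ 2 * (L * ((d:ℝ)^2 * L)) + 2 * (L * ((d:ℝ)^2 * L)) := add_le_add hqre hqim
        _ = (2 * (d:ℝ) * L)^2 := by ring
    calc Real.sqrt (∑ i, ‖pderiv i f ε‖^2) ≤ Real.sqrt ((2 * (d:ℝ) * L)^2) :=
        Real.sqrt_le_sqrt hfin
      _ = 2 * (d:ℝ) * L := by
        rw [Real.sqrt_sq (by positivity)]

end HammingCube
end
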